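/- arXiv:1701.02815 — 3 statements merged into one kernel-verified Lean document; each statement's English description precedes it below -/
import Mathlib

section
/- (SGD for smooth nonconvex functions, unbiased case) Let H : R^p → R be L-Lipschitz smooth and bounded below by H(Θ*). Suppose iterates Θ_{i+1} = Θ_i − γ_i g_i where, conditioned on the past, E[g_i] = ∇H(Θ_i) and E[‖g_i − ∇H(Θ_i)‖²] ≤ σ². Then for any stepsizes with γ_i < 2/L, Σ_{i=1}^t (γ_i − (L/2)γ_i²) E[‖∇H(Θ_i)‖²] ≤ H(Θ_1) − H(Θ*) + (Lσ²/2) Σ_{i=1}^t γ_i². -/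
open MeasureTheory Finset

/-! Apply the descent inequality at `Θ_{i+1} = Θ_i - γ_i g_i` and split `g_i = ∇H(Θ_i) + e_i`.
Since `∇H(Θ_i)` is `ℱ_i`-measurable and `E[e_i | ℱ_i] = 0`, the pull-out property kills the cross
term `E⟪∇H(Θ_i), e_i⟫`, and the noise term is at most `σ²`. This gives
`(γ_i - Lγ_i²/2) E‖∇H(Θ_i)‖² ≤ E H(Θ_i) - E H(Θ_{i+1}) + Lσ²γ_i²/2`, which telescopes; finally
`E H(Θ_t) ≥ H(Θ*)`. Measurability of `∇H(Θ_i)` needs no regularity of `H`: `fderiv` is always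
Borel measurable. -/

theorem Finset.sum_range_le_sub_add_sum_of_le {a b c : ℕ → ℝ}
    (h : ∀ i, a i ≤ b i - b (i + 1) + c i) (n : ℕ) :
    ∑ i ∈ range n, a i ≤ b 0 - b n + ∑ i ∈ range n, c i :=
  calc ∑ i ∈ range n, a i ≤ ∑ i ∈ range n, (b i - b (i + 1) + c i) := sum_le_sum fun i _ => h i
    _ = b 0 - b n + ∑ i ∈ range n, c i := by rw [sum_add_distrib, sum_range_sub']

section
variable {E : Type*} [NormedAddCommGroup E] [InnerProductSpace ℝ E] [CompleteSpace E]

open scoped InnerProductSpace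

theorem measurable_gradient [MeasurableSpace E] [BorelSpace E] (f : E → ℝ) :
    Measurable (gradient f) := by
  let _ : MeasurableSpace (StrongDual ℝ E) := borel _
  have _ : BorelSpace (StrongDual ℝ E) := ⟨rfl⟩
  exact (InnerProductSpace.toDual ℝ E).symm.continuous.measurable.comp (measurable_fderiv ℝ f)

theorem apply_sub_smul_le_of_descent {f : E → ℝ} {L : ℝ}
    (hsmooth : ∀ x y, f y ≤ f x + ⟪gradient f x, y - x⟫_ℝ + L / 2 * ‖y - x‖ ^ 2)
    (c : ℝ) (x v : E) :
    f (x - c • v) ≤ f x - (c - L / 2 * c ^ 2) * ‖gradient f x‖ ^ 2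
      + (L * c ^ 2 - c) * ⟪gradient f x, v - gradient f x⟫_ℝ
      + L / 2 * c ^ 2 * ‖v - gradient f x‖ ^ 2 := by
  set G := gradient f x
  obtain ⟨e, rfl⟩ : ∃ e, v = G + e := ⟨v - G, by abel⟩
  have hstep := hsmooth x (x - c • (G + e))
  rw [sub_sub_cancel_left, inner_neg_right, norm_neg, norm_smul, mul_pow, Real.norm_eq_abs,
    sq_abs, inner_smul_right, inner_add_right, real_inner_self_eq_norm_sq, norm_add_sq_real] at hstep
  rw [add_sub_cancel_left]
  linarith

variable {Ω : Type*} {m m0 : MeasurableSpace Ω} {μ : Measure Ω}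

theorem integral_inner_eq_zero_of_condExp_eq_zero (hm : m ≤ m0) [SigmaFinite (μ.trim hm)]
    {X Y : Ω → E} (hX : StronglyMeasurable[m] X) (hXY : Integrable (fun ω => ⟪X ω, Y ω⟫_ℝ) μ)
    (hY : Integrable Y μ) (hcond : μ[Y | m] =ᵐ[μ] 0) :
    ∫ ω, ⟪X ω, Y ω⟫_ℝ ∂μ = 0 := by
  have hpull := condExp_bilin_of_stronglyMeasurable_left (innerSL ℝ) hX hXY hY
  calc ∫ ω, ⟪X ω, Y ω⟫_ℝ ∂μ = ∫ ω, μ[fun ω => ⟪X ω, Y ω⟫_ℝ | m] ω ∂μ := (integral_condExp hm).symm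
    _ = ∫ _, (0 : ℝ) ∂μ := integral_congr_ae <| hpull.trans <| by
          filter_upwards [hcond] with ω hω
          simp [hω]
    _ = 0 := integral_zero _ _

theorem integral_sgd_step_le (hm : m ≤ m0) [IsFiniteMeasure μ] {f : E → ℝ} {L σ : ℝ}
    (hL : 0 ≤ L)
    (hsmooth : ∀ x y, f y ≤ f x + ⟪gradient f x, y - x⟫_ℝ + L / 2 * ‖y - x‖ ^ 2)
    (c : ℝ) {θ θ' g : Ω → E} (hθ' : ∀ ω, θ' ω = θ ω - c • g ω)
    (hG : StronglyMeasurable[m] fun ω => gradient f (θ ω))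
    (hg : Integrable g μ) (hG2 : Integrable (fun ω => ‖gradient f (θ ω)‖ ^ 2) μ)
    (he2 : Integrable (fun ω => ‖g ω - gradient f (θ ω)‖ ^ 2) μ)
    (hfθ : Integrable (fun ω => f (θ ω)) μ) (hfθ' : Integrable (fun ω => f (θ' ω)) μ)
    (hunbiased : μ[g | m] =ᵐ[μ] fun ω => gradient f (θ ω))
    (hvar : ∫ ω, ‖g ω - gradient f (θ ω)‖ ^ 2 ∂μ ≤ σ ^ 2) :
    (c - L / 2 * c ^ 2) * ∫ ω, ‖gradient f (θ ω)‖ ^ 2 ∂μ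
      ≤ ∫ ω, f (θ ω) ∂μ - ∫ ω, f (θ' ω) ∂μ + L * σ ^ 2 / 2 * c ^ 2 := by
  set G := fun ω => gradient f (θ ω)
  have hGL2 : MemLp G 2 μ :=
    (memLp_two_iff_integrable_sq_norm (hG.mono hm).aestronglyMeasurable).2 hG2
  have heL2 : MemLp (fun ω => g ω - G ω) 2 μ :=
    (memLp_two_iff_integrable_sq_norm (hg.1.sub hGL2.1)).2 he2
  have hGint : Integrable G μ := hGL2.integrable one_le_two
  have hcross_int : Integrable (fun ω => ⟪G ω, g ω - G ω⟫_ℝ) μ :=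
    memLp_one_iff_integrable.1 ((innerSL ℝ).memLp_of_bilin 1 hGL2 heL2)
  have hnoise : μ[g - G | m] =ᵐ[μ] 0 := by
    filter_upwards [condExp_sub hg hGint m, hunbiased,
      (condExp_of_stronglyMeasurable hm hG hGint).eventuallyEq] with ω hsub hgω hGω
    rw [hsub, Pi.sub_apply, hgω, hGω, sub_self, Pi.zero_apply]
  have hcross : ∫ ω, ⟪G ω, g ω - G ω⟫_ℝ ∂μ = 0 :=
    integral_inner_eq_zero_of_condExp_eq_zero hm hG hcross_int (hg.sub hGint) hnoise
  have hint₁ := hfθ.sub (hG2.const_mul (c - L / 2 * c ^ 2))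
  have hint₂ := hint₁.add (hcross_int.const_mul (L * c ^ 2 - c))
  have hdescent := integral_mono hfθ' (hint₂.add (he2.const_mul (L / 2 * c ^ 2)))
    fun ω => hθ' ω ▸ apply_sub_smul_le_of_descent hsmooth c (θ ω) (g ω)
  simp only [Pi.add_apply, Pi.sub_apply] at hdescent
  rw [integral_add, integral_add, integral_sub, integral_const_mul, integral_const_mul,
    integral_const_mul, hcross] at hdescent
  · linarith [mul_le_mul_of_nonneg_left hvar (by positivity : 0 ≤ L / 2 * c ^ 2)]
  exacts [hfθ, hG2.const_mul _, hint₁, hcross_int.const_mul _, hint₂, he2.const_mul _]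

end

theorem stmt_6_general {p : ℕ}
    (Ω : Type*) [MeasurableSpace Ω] (μ : Measure Ω) [IsProbabilityMeasure μ]
    (ℱ : Filtration ℕ (inferInstance : MeasurableSpace Ω))
    (H : EuclideanSpace ℝ (Fin p) → ℝ) (L σ : ℝ) (hL : 0 < L)
    (Θstar : EuclideanSpace ℝ (Fin p))
    -- L-Lipschitz smoothness (descent-lemma form):
    (hsmooth : ∀ x y : EuclideanSpace ℝ (Fin p),
      H y ≤ H x + inner ℝ (gradient H x) (y - x) + L / 2 * ‖y - x‖ ^ 2)
    -- bounded below by `H Θstar`: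
    (hbelow : ∀ x, H Θstar ≤ H x)
    (t : ℕ) (γ : ℕ → ℝ)
    (Θ g : ℕ → Ω → EuclideanSpace ℝ (Fin p))
    -- deterministic initialization:
    (Θ₀ : EuclideanSpace ℝ (Fin p)) (hinit : ∀ ω, Θ 0 ω = Θ₀)
    -- SGD iterates:
    (hiter : ∀ i, ∀ ω, Θ (i + 1) ω = Θ i ω - γ i • g i ω)
    -- adaptedness and integrability:
    (hadapted : ∀ i, StronglyMeasurable[ℱ i] (Θ i))
    (hgint : ∀ i, Integrable (g i) μ)
    (hsqint : ∀ i, Integrable (fun ω => ‖g i ω - gradient H (Θ i ω)‖ ^ 2) μ)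
    (hHint : ∀ i, Integrable (fun ω => H (Θ i ω)) μ)
    (hgradsqint : ∀ i, Integrable (fun ω => ‖gradient H (Θ i ω)‖ ^ 2) μ)
    -- unbiasedness: conditional expectation of `g i` given the past is the gradient:
    (hunbiased : ∀ i, μ[g i | ℱ i] =ᵐ[μ] fun ω => gradient H (Θ i ω))
    -- bounded variance:
    (hvar : ∀ i, ∫ ω, ‖g i ω - gradient H (Θ i ω)‖ ^ 2 ∂μ ≤ σ ^ 2) :
    ∑ i ∈ range t, (γ i - L / 2 * (γ i) ^ 2) *
        ∫ ω, ‖gradient H (Θ i ω)‖ ^ 2 ∂μ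
      ≤ H Θ₀ - H Θstar + L * σ ^ 2 / 2 * ∑ i ∈ range t, (γ i) ^ 2 := by
  have hgrad_meas (i : ℕ) : StronglyMeasurable[ℱ i] fun ω => gradient H (Θ i ω) :=
    ((measurable_gradient H).comp (hadapted i).measurable).stronglyMeasurable
  have hdescent (i : ℕ) := integral_sgd_step_le (ℱ.le i) hL.le hsmooth (γ i) (hiter i)
    (hgrad_meas i) (hgint i) (hgradsqint i) (hsqint i) (hHint i) (hHint (i + 1)) (hunbiased i)
    (hvar i)
  have hstart : ∫ ω, H (Θ 0 ω) ∂μ = H Θ₀ := by simp [hinit]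
  have hend : H Θstar ≤ ∫ ω, H (Θ t ω) ∂μ := by
    simpa using integral_mono (integrable_const (H Θstar)) (hHint t) fun ω => hbelow (Θ t ω)
  have htelescope := sum_range_le_sub_add_sum_of_le hdescent t
  rw [← mul_sum, hstart] at htelescope
  linarith

theorem stmt_6 {p : ℕ}
    (Ω : Type*) [MeasurableSpace Ω] (μ : Measure Ω) [IsProbabilityMeasure μ]
    (ℱ : Filtration ℕ (inferInstance : MeasurableSpace Ω))
    (H : EuclideanSpace ℝ (Fin p) → ℝ) (L σ : ℝ) (hL : 0 < L)
    (Θstar : EuclideanSpace ℝ (Fin p))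
    -- L-Lipschitz smoothness (descent-lemma form):
    (hsmooth : ∀ x y : EuclideanSpace ℝ (Fin p),
      H y ≤ H x + inner ℝ (gradient H x) (y - x) + L / 2 * ‖y - x‖ ^ 2)
    (hgradLip : ∀ x y : EuclideanSpace ℝ (Fin p),
      ‖gradient H x - gradient H y‖ ≤ L * ‖x - y‖)
    -- bounded below by `H Θstar`:
    (hbelow : ∀ x, H Θstar ≤ H x)
    (t : ℕ) (γ : ℕ → ℝ)
    (Θ g : ℕ → Ω → EuclideanSpace ℝ (Fin p))
    -- deterministic initialization:
    (Θ₀ : EuclideanSpace ℝ (Fin p)) (hinit : ∀ ω, Θ 0 ω = Θ₀)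
    -- SGD iterates:
    (hiter : ∀ i, ∀ ω, Θ (i + 1) ω = Θ i ω - γ i • g i ω)
    -- adaptedness and integrability:
    (hadapted : ∀ i, StronglyMeasurable[ℱ i] (Θ i))
    (hgmeas : ∀ i, StronglyMeasurable[ℱ (i + 1)] (g i))
    (hgint : ∀ i, Integrable (g i) μ)
    (hsqint : ∀ i, Integrable (fun ω => ‖g i ω - gradient H (Θ i ω)‖ ^ 2) μ)
    (hHint : ∀ i, Integrable (fun ω => H (Θ i ω)) μ)
    (hgradsqint : ∀ i, Integrable (fun ω => ‖gradient H (Θ i ω)‖ ^ 2) μ)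
    -- unbiasedness: conditional expectation of `g i` given the past is the gradient:
    (hunbiased : ∀ i, μ[g i | ℱ i] =ᵐ[μ] fun ω => gradient H (Θ i ω))
    -- bounded variance:
    (hvar : ∀ i, ∫ ω, ‖g i ω - gradient H (Θ i ω)‖ ^ 2 ∂μ ≤ σ ^ 2)
    -- stepsize condition:
    (hstep : ∀ i, 0 < γ i ∧ γ i < 2 / L) :
    ∑ i ∈ range t, (γ i - L / 2 * (γ i) ^ 2) *
        ∫ ω, ‖gradient H (Θ i ω)‖ ^ 2 ∂μ
      ≤ H Θ₀ - H Θstar + L * σ ^ 2 / 2 * ∑ i ∈ range t, (γ i) ^ 2 :=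
  stmt_6_general Ω μ ℱ H L σ hL Θstar hsmooth hbelow t γ Θ g Θ₀ hinit hiter hadapted hgint hsqint
    hHint hgradsqint hunbiased hvar
end

section
/- If H is L-Lipschitz smooth and bounded below, the stochastic gradients are unbiased with variance bounded by σ², and the stepsizes are chosen as γ_i = c/√t for a constant c with c/√t < 2/L, then the randomly sampled iterate Θ_R with P(R = i) = (2γ_i − Lγ_i²)/Σ_{j=1}^t (2γ_j − Lγ_j²) satisfies E[‖∇H(Θ_R)‖²] = O(1/√t). -/
open MeasureTheory Finset
open scoped RealInnerProductSpace

/-! For a fixed horizon `t` the stepsize `γ = c / √t` is constant, and the quadratic upper bound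
gives the one-step descent
`E H(Θᵢ₊₁) ≤ E H(Θᵢ) - (γ - Lγ²/2) E‖∇H(Θᵢ)‖² + Lγ²σ²/2`,
where the cross term between `∇H(Θᵢ)` and the noise `gᵢ - ∇H(Θᵢ)` vanishes in expectation
because `∇H(Θᵢ)` is known at time `i` and the noise is conditionally centred. Telescoping gives
`(γ - Lγ²/2) ∑ᵢ E‖∇H(Θᵢ)‖² ≤ H(Θ₀) - H(Θ*) + Lc²σ²/2`. The sampling weights are all equal, so
`E‖∇H(Θ_R)‖²` is the plain average, and `t (γ - Lγ²/2) ≥ c (1 - Lc/2) √t` gives the rate. -/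

theorem measurable_gradient_s7 {E : Type*} [NormedAddCommGroup E] [InnerProductSpace ℝ E]
    [CompleteSpace E] [MeasurableSpace E] [BorelSpace E] (H : E → ℝ) :
    Measurable (gradient H) :=
  (InnerProductSpace.toDual ℝ E).symm.continuous.measurable.comp (measurable_fderiv ℝ H)

section ConditionalExpectation

variable {Ω E : Type*} {m m0 : MeasurableSpace Ω} {μ : Measure Ω}
  [NormedAddCommGroup E] [InnerProductSpace ℝ E]

theorem integrable_inner_of_memLp_two {f g : Ω → E} (hf : MemLp f 2 μ) (hg : MemLp g 2 μ) :
    Integrable (fun ω => ⟪f ω, g ω⟫) μ :=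
  memLp_one_iff_integrable.1 ((innerSL ℝ : E →L[ℝ] E →L[ℝ] ℝ).memLp_of_bilin 1 hf hg)

theorem integral_inner_sub_eq_zero_of_condExp_ae_eq [CompleteSpace E] (hm : m ≤ m0)
    [SigmaFinite (μ.trim hm)]
    {f g : Ω → E} (hf : StronglyMeasurable[m] f) (hfi : Integrable f μ) (hgi : Integrable g μ)
    (hfg : Integrable (fun ω => ⟪f ω, g ω - f ω⟫) μ) (hcond : μ[g|m] =ᵐ[μ] f) :
    ∫ ω, ⟪f ω, g ω - f ω⟫ ∂μ = 0 := by
  have hnoise : μ[g - f|m] =ᵐ[μ] 0 := by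
    filter_upwards [condExp_sub hgi hfi m, hcond] with ω hsub hω
    rw [hsub, Pi.sub_apply, hω, condExp_of_stronglyMeasurable hm hf hfi, sub_self, Pi.zero_apply]
  calc ∫ ω, ⟪f ω, g ω - f ω⟫ ∂μ = ∫ ω, μ[fun ω => ⟪f ω, g ω - f ω⟫|m] ω ∂μ :=
        (integral_condExp hm).symm
    _ = ∫ ω, ⟪f ω, μ[g - f|m] ω⟫ ∂μ :=
        integral_congr_ae (condExp_bilin_of_stronglyMeasurable_left
          (innerSL ℝ : E →L[ℝ] E →L[ℝ] ℝ) hf hfg (hgi.sub hfi))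
    _ = ∫ ω, ⟪f ω, (0 : E)⟫ ∂μ :=
        integral_congr_ae (hnoise.mono fun ω hω => by simp only [hω, Pi.zero_apply])
    _ = 0 := by simp

end ConditionalExpectation

theorem apply_sub_smul_le_of_quadratic_bound {E : Type*} [NormedAddCommGroup E]
    [InnerProductSpace ℝ E] {H : E → ℝ} {L γ : ℝ} {x d : E}
    (hH : ∀ y, H y ≤ H x + ⟪d, y - x⟫ + L / 2 * ‖y - x‖ ^ 2) (v : E) :
    H (x - γ • v) ≤ H x - (γ - L * γ ^ 2 / 2) * ‖d‖ ^ 2 + (L * γ ^ 2 - γ) * ⟪d, v - d⟫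
      + L * γ ^ 2 / 2 * ‖v - d‖ ^ 2 := by
  obtain ⟨e, rfl⟩ : ∃ e, v = d + e := ⟨v - d, by abel⟩
  have h := hH (x - γ • (d + e))
  simp only [sub_sub_cancel_left, add_sub_cancel_left, inner_neg_right, norm_neg,
    norm_smul, mul_pow, Real.norm_eq_abs, sq_abs, inner_smul_right, inner_add_right,
    norm_add_sq_real, real_inner_self_eq_norm_sq] at h ⊢
  linarith

section SGD

variable {Ω E : Type*} {m0 : MeasurableSpace Ω} {μ : Measure Ω}
  [NormedAddCommGroup E] [InnerProductSpace ℝ E] [FiniteDimensional ℝ E]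
  [MeasurableSpace E] [BorelSpace E] {H : E → ℝ} {L γ σ : ℝ}

theorem integral_sgd_step_le_s7 [IsFiniteMeasure μ] {m : MeasurableSpace Ω} (hm : m ≤ m0)
    (hL : 0 ≤ L) (hH : ∀ x y, H y ≤ H x + ⟪gradient H x, y - x⟫ + L / 2 * ‖y - x‖ ^ 2)
    {X G : Ω → E} (hX : StronglyMeasurable[m] X) (hG : Integrable G μ)
    (hcond : μ[G|m] =ᵐ[μ] fun ω => gradient H (X ω))
    (hHX : Integrable (fun ω => H (X ω)) μ)
    (hHstep : Integrable (fun ω => H (X ω - γ • G ω)) μ)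
    (hgrad : Integrable (fun ω => ‖gradient H (X ω)‖ ^ 2) μ)
    (hnoise : Integrable (fun ω => ‖G ω - gradient H (X ω)‖ ^ 2) μ)
    (hvar : ∫ ω, ‖G ω - gradient H (X ω)‖ ^ 2 ∂μ ≤ σ ^ 2) :
    ∫ ω, H (X ω - γ • G ω) ∂μ ≤ ∫ ω, H (X ω) ∂μ
      - (γ - L * γ ^ 2 / 2) * ∫ ω, ‖gradient H (X ω)‖ ^ 2 ∂μ + L * γ ^ 2 / 2 * σ ^ 2 := by
  set D : Ω → E := fun ω => gradient H (X ω)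
  have hD : StronglyMeasurable[m] D :=
    ((measurable_gradient_s7 H).comp hX.measurable).stronglyMeasurable
  have hD2 : MemLp D 2 μ :=
    (memLp_two_iff_integrable_sq_norm (hD.mono hm).aestronglyMeasurable).2 hgrad
  have hN2 : MemLp (fun ω => G ω - D ω) 2 μ :=
    (memLp_two_iff_integrable_sq_norm
      (hG.aestronglyMeasurable.sub (hD.mono hm).aestronglyMeasurable)).2 hnoise
  have hcross := integrable_inner_of_memLp_two hD2 hN2
  have horth : ∫ ω, ⟪D ω, G ω - D ω⟫ ∂μ = 0 :=
    integral_inner_sub_eq_zero_of_condExp_ae_eq hm hD (hD2.integrable one_le_two) hG hcross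
      hcond
  calc ∫ ω, H (X ω - γ • G ω) ∂μ
      ≤ ∫ ω, (H (X ω) - (γ - L * γ ^ 2 / 2) * ‖D ω‖ ^ 2 + (L * γ ^ 2 - γ) * ⟪D ω, G ω - D ω⟫
          + L * γ ^ 2 / 2 * ‖G ω - D ω‖ ^ 2) ∂μ :=
        integral_mono hHstep (((hHX.sub (hgrad.const_mul _)).add (hcross.const_mul _)).add
          (hnoise.const_mul _)) fun ω => apply_sub_smul_le_of_quadratic_bound (hH (X ω)) (G ω)
    _ = ∫ ω, H (X ω) ∂μ - (γ - L * γ ^ 2 / 2) * ∫ ω, ‖D ω‖ ^ 2 ∂μ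
          + (L * γ ^ 2 - γ) * ∫ ω, ⟪D ω, G ω - D ω⟫ ∂μ
          + L * γ ^ 2 / 2 * ∫ ω, ‖G ω - D ω‖ ^ 2 ∂μ := by
        have h₁ : Integrable (fun ω => H (X ω) - (γ - L * γ ^ 2 / 2) * ‖D ω‖ ^ 2) μ :=
          hHX.sub (hgrad.const_mul _)
        have h₂ : Integrable (fun ω => H (X ω) - (γ - L * γ ^ 2 / 2) * ‖D ω‖ ^ 2
            + (L * γ ^ 2 - γ) * ⟪D ω, G ω - D ω⟫) μ := h₁.add (hcross.const_mul _)
        rw [integral_add h₂ (hnoise.const_mul _), integral_add h₁ (hcross.const_mul _),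
          integral_sub hHX (hgrad.const_mul _),
          integral_const_mul, integral_const_mul, integral_const_mul]
    _ ≤ _ := by
        rw [horth, mul_zero, add_zero]
        gcongr

theorem sgd_sum_integral_sq_norm_gradient_le [IsProbabilityMeasure μ] {ℱ : Filtration ℕ m0}
    (hL : 0 ≤ L) (hH : ∀ x y, H y ≤ H x + ⟪gradient H x, y - x⟫ + L / 2 * ‖y - x‖ ^ 2)
    {Hmin : ℝ} (hbelow : ∀ x, Hmin ≤ H x) {Θ g : ℕ → Ω → E}
    (hiter : ∀ i ω, Θ (i + 1) ω = Θ i ω - γ • g i ω)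
    (hadapted : ∀ i, StronglyMeasurable[ℱ i] (Θ i)) (hgint : ∀ i, Integrable (g i) μ)
    (hsqint : ∀ i, Integrable (fun ω => ‖g i ω - gradient H (Θ i ω)‖ ^ 2) μ)
    (hHint : ∀ i, Integrable (fun ω => H (Θ i ω)) μ)
    (hgradsqint : ∀ i, Integrable (fun ω => ‖gradient H (Θ i ω)‖ ^ 2) μ)
    (hunbiased : ∀ i, μ[g i|ℱ i] =ᵐ[μ] fun ω => gradient H (Θ i ω))
    (hvar : ∀ i, ∫ ω, ‖g i ω - gradient H (Θ i ω)‖ ^ 2 ∂μ ≤ σ ^ 2) (n : ℕ) :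
    (γ - L * γ ^ 2 / 2) * ∑ i ∈ range n, ∫ ω, ‖gradient H (Θ i ω)‖ ^ 2 ∂μ
      ≤ ∫ ω, H (Θ 0 ω) ∂μ - Hmin + n * (L * γ ^ 2 / 2 * σ ^ 2) := by
  set h : ℕ → ℝ := fun i => ∫ ω, H (Θ i ω) ∂μ
  have hstep : ∀ i, (γ - L * γ ^ 2 / 2) * ∫ ω, ‖gradient H (Θ i ω)‖ ^ 2 ∂μ
      ≤ h i - h (i + 1) + L * γ ^ 2 / 2 * σ ^ 2 := by
    intro i
    have hnext : (fun ω => H (Θ (i + 1) ω)) = fun ω => H (Θ i ω - γ • g i ω) :=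
      funext fun ω => by rw [hiter]
    have := integral_sgd_step_le_s7 (ℱ.le i) hL hH (hadapted i) (hgint i) (hunbiased i) (hHint i)
      (hnext ▸ hHint (i + 1)) (hgradsqint i) (hsqint i) (hvar i)
    simp only [h, hnext]
    linarith
  have hlast : Hmin ≤ h n := by
    simpa using integral_mono (integrable_const Hmin) (hHint n) fun ω => hbelow (Θ n ω)
  calc (γ - L * γ ^ 2 / 2) * ∑ i ∈ range n, ∫ ω, ‖gradient H (Θ i ω)‖ ^ 2 ∂μ
      ≤ ∑ i ∈ range n, (h i - h (i + 1) + L * γ ^ 2 / 2 * σ ^ 2) := by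
        rw [mul_sum]
        exact sum_le_sum fun i _ => hstep i
    _ = h 0 - h n + n * (L * γ ^ 2 / 2 * σ ^ 2) := by
        rw [sum_add_distrib, sum_range_sub', sum_const, card_range, nsmul_eq_mul]
    _ ≤ _ := by linarith

end SGD

theorem sum_range_div_sum_const_mul {K : Type*} [Field K] {w : K} (hw : w ≠ 0) (t : ℕ)
    (a : ℕ → K) : ∑ i ∈ range t, (w / ∑ _j ∈ range t, w) * a i = (∑ i ∈ range t, a i) / t := by
  rw [← mul_sum, sum_const, card_range, nsmul_eq_mul, div_mul_cancel_right₀ hw, inv_mul_eq_div]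

theorem div_le_div_sqrt_of_descent_bound {L c σ A S : ℝ} {t : ℕ} (hL : 0 ≤ L) (hc : 0 < c)
    (hLc : L * c < 2) (ht : 1 ≤ t) (hS : 0 ≤ S)
    (h : (c / √t - L * (c / √t) ^ 2 / 2) * S ≤ A + t * (L * (c / √t) ^ 2 / 2 * σ ^ 2)) :
    S / t ≤ 2 * (A + L * c ^ 2 / 2 * σ ^ 2) / (c * (2 - L * c)) / √t := by
  have ht' : (1 : ℝ) ≤ t := by exact_mod_cast ht
  set s := √(t : ℝ)
  have hs1 : 1 ≤ s := Real.one_le_sqrt.2 ht'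
  have hst : (t : ℝ) = s ^ 2 := (Real.sq_sqrt (by positivity)).symm
  rw [hst] at h ⊢
  have hs0 : 0 < s := by linarith
  have h' : c * (2 * s - L * c) * S ≤ 2 * s ^ 2 * (A + L * c ^ 2 / 2 * σ ^ 2) := by
    have e : c / s - L * (c / s) ^ 2 / 2 = c * (2 * s - L * c) / (2 * s ^ 2) := by
      field_simp
    have e' : s ^ 2 * (L * (c / s) ^ 2 / 2 * σ ^ 2) = L * c ^ 2 / 2 * σ ^ 2 := by
      field_simp
    rw [e, e', div_mul_eq_mul_div, div_le_iff₀ (by positivity)] at h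
    linarith
  -- `(2 - L c) s ≤ 2 s - L c` because `s ≥ 1`
  have hgap : 0 ≤ c * S * (L * c * (s - 1)) := by
    have : 0 ≤ s - 1 := by linarith
    positivity
  rw [div_div, div_le_div_iff₀ (by positivity) (mul_pos (mul_pos hc (by linarith)) hs0)]
  nlinarith

theorem stmt_7_general {p : ℕ}
    (Ω : Type*) [MeasurableSpace Ω] (μ : Measure Ω) [IsProbabilityMeasure μ]
    (ℱ : ℕ → Filtration ℕ (inferInstance : MeasurableSpace Ω))
    (H : EuclideanSpace ℝ (Fin p) → ℝ) (L σ c : ℝ) (hL : 0 < L) (hc : 0 < c)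
    (Θstar : EuclideanSpace ℝ (Fin p))
    (hsmooth : ∀ x y : EuclideanSpace ℝ (Fin p),
      H y ≤ H x + inner ℝ (gradient H x) (y - x) + L / 2 * ‖y - x‖ ^ 2)
    (hbelow : ∀ x, H Θstar ≤ H x)
    -- for each horizon `t`, a run of SGD with constant stepsize `γ t = c / √t`:
    (γ : ℕ → ℝ) (hγ : ∀ t, γ t = c / Real.sqrt t)
    (hstep : ∀ t : ℕ, 1 ≤ t → γ t < 2 / L)
    (Θ g : ℕ → ℕ → Ω → EuclideanSpace ℝ (Fin p))
    (Θ₀ : EuclideanSpace ℝ (Fin p)) (hinit : ∀ t, ∀ ω, Θ t 0 ω = Θ₀)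
    (hiter : ∀ t i, ∀ ω, Θ t (i + 1) ω = Θ t i ω - γ t • g t i ω)
    (hadapted : ∀ t i, StronglyMeasurable[(ℱ t) i] (Θ t i))
    (hgint : ∀ t i, Integrable (g t i) μ)
    (hsqint : ∀ t i,
      Integrable (fun ω => ‖g t i ω - gradient H (Θ t i ω)‖ ^ 2) μ)
    (hHint : ∀ t i, Integrable (fun ω => H (Θ t i ω)) μ)
    (hgradsqint : ∀ t i, Integrable (fun ω => ‖gradient H (Θ t i ω)‖ ^ 2) μ)
    (hunbiased : ∀ t i,
      μ[g t i | (ℱ t) i] =ᵐ[μ] fun ω => gradient H (Θ t i ω))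
    (hvar : ∀ t i, ∫ ω, ‖g t i ω - gradient H (Θ t i ω)‖ ^ 2 ∂μ ≤ σ ^ 2) :
    -- `E‖∇H(Θ_R)‖²`, where `P(R = i) ∝ 2γᵢ - Lγᵢ²`, is `O(1/√t)`:
    ∃ C : ℝ, ∀ t : ℕ, 1 ≤ t →
      ∑ i ∈ range t,
          ((2 * γ t - L * (γ t) ^ 2) / ∑ j ∈ range t, (2 * γ t - L * (γ t) ^ 2)) *
            ∫ ω, ‖gradient H (Θ t i ω)‖ ^ 2 ∂μ
        ≤ C / Real.sqrt t := by
  have hLc : L * c < 2 := by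
    have h₁ := hstep 1 le_rfl
    rwa [hγ, Nat.cast_one, Real.sqrt_one, div_one, lt_div_iff₀ hL, mul_comm] at h₁
  refine ⟨2 * (H Θ₀ - H Θstar + L * c ^ 2 / 2 * σ ^ 2) / (c * (2 - L * c)), fun t ht => ?_⟩
  have hγpos : 0 < γ t := hγ t ▸ div_pos hc (Real.sqrt_pos.2 (by exact_mod_cast ht))
  have hγL : L * γ t < 2 := by have := hstep t ht; rwa [lt_div_iff₀ hL, mul_comm] at this
  have hw : 2 * γ t - L * γ t ^ 2 ≠ 0 := by nlinarith
  have hrun := sgd_sum_integral_sq_norm_gradient_le hL.le hsmooth hbelow (hiter t) (hadapted t)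
    (hgint t) (hsqint t) (hHint t) (hgradsqint t) (hunbiased t) (hvar t) t
  simp only [hinit, integral_const, probReal_univ, one_smul, hγ t] at hrun
  rw [sum_range_div_sum_const_mul hw]
  exact div_le_div_sqrt_of_descent_bound hL.le hc hLc ht
    (sum_nonneg fun i _ => integral_nonneg fun ω => sq_nonneg _) hrun

theorem stmt_7 {p : ℕ}
    (Ω : Type*) [MeasurableSpace Ω] (μ : Measure Ω) [IsProbabilityMeasure μ]
    (ℱ : ℕ → Filtration ℕ (inferInstance : MeasurableSpace Ω))
    (H : EuclideanSpace ℝ (Fin p) → ℝ) (L σ c : ℝ) (hL : 0 < L) (hc : 0 < c)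
    (Θstar : EuclideanSpace ℝ (Fin p))
    (hsmooth : ∀ x y : EuclideanSpace ℝ (Fin p),
      H y ≤ H x + inner ℝ (gradient H x) (y - x) + L / 2 * ‖y - x‖ ^ 2)
    (hgradLip : ∀ x y : EuclideanSpace ℝ (Fin p),
      ‖gradient H x - gradient H y‖ ≤ L * ‖x - y‖)
    (hbelow : ∀ x, H Θstar ≤ H x)
    -- for each horizon `t`, a run of SGD with constant stepsize `γ t = c / √t`:
    (γ : ℕ → ℝ) (hγ : ∀ t, γ t = c / Real.sqrt t)
    (hstep : ∀ t : ℕ, 1 ≤ t → γ t < 2 / L)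
    (Θ g : ℕ → ℕ → Ω → EuclideanSpace ℝ (Fin p))
    (Θ₀ : EuclideanSpace ℝ (Fin p)) (hinit : ∀ t, ∀ ω, Θ t 0 ω = Θ₀)
    (hiter : ∀ t i, ∀ ω, Θ t (i + 1) ω = Θ t i ω - γ t • g t i ω)
    (hadapted : ∀ t i, StronglyMeasurable[(ℱ t) i] (Θ t i))
    (hgmeas : ∀ t i, StronglyMeasurable[(ℱ t) (i + 1)] (g t i))
    (hgint : ∀ t i, Integrable (g t i) μ)
    (hsqint : ∀ t i,
      Integrable (fun ω => ‖g t i ω - gradient H (Θ t i ω)‖ ^ 2) μ)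
    (hHint : ∀ t i, Integrable (fun ω => H (Θ t i ω)) μ)
    (hgradsqint : ∀ t i, Integrable (fun ω => ‖gradient H (Θ t i ω)‖ ^ 2) μ)
    (hunbiased : ∀ t i,
      μ[g t i | (ℱ t) i] =ᵐ[μ] fun ω => gradient H (Θ t i ω))
    (hvar : ∀ t i, ∫ ω, ‖g t i ω - gradient H (Θ t i ω)‖ ^ 2 ∂μ ≤ σ ^ 2) :
    -- `E‖∇H(Θ_R)‖²`, where `P(R = i) ∝ 2γᵢ - Lγᵢ²`, is `O(1/√t)`:
    ∃ C : ℝ, ∀ t : ℕ, 1 ≤ t →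
      ∑ i ∈ range t,
          ((2 * γ t - L * (γ t) ^ 2) / ∑ j ∈ range t, (2 * γ t - L * (γ t) ^ 2)) *
            ∫ ω, ‖gradient H (Θ t i ω)‖ ^ 2 ∂μ
        ≤ C / Real.sqrt t :=
  stmt_7_general Ω μ ℱ H L σ c hL hc Θstar hsmooth hbelow γ hγ hstep Θ g Θ₀ hinit hiter hadapted
    hgint hsqint hHint hgradsqint hunbiased hvar
end

section
/- Under the biased SGD bound with second moments bounded by σ², if γ_i = c/√t for all i = 1,…,t and Θ_R is sampled with P(R = i) = γ_i / Σ_{j=1}^t γ_j (i.e., uniformly when stepsizes are equal), then E[(Θ_R − Θ*)ᵀ g̃(Θ_R)] ≤ (E[‖Θ_1 − Θ*‖²] + σ² Σ_i γ_i²)/(2 Σ_i γ_i) = O(1/√t). -/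
/-!
One SGD step gives `‖Θᵢ₊₁ − Θ*‖² = ‖Θᵢ − Θ*‖² − 2γᵢ⟪Θᵢ − Θ*, ĝᵢ⟫ + γᵢ²‖ĝᵢ‖²`. Since `Θᵢ − Θ*` is
`ℱᵢ`-measurable, the pull-out property of conditional expectation turns `E⟪Θᵢ − Θ*, ĝᵢ⟫` into
`E⟪Θᵢ − Θ*, g̃(Θᵢ)⟫`, so taking expectations and telescoping over `i < t` (dropping the final
nonnegative distance) bounds `Σ 2γᵢ E⟪Θᵢ − Θ*, g̃(Θᵢ)⟫` by `E‖Θ₀ − Θ*‖² + σ² Σ γᵢ²`. For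
`γᵢ = c/√t` one has `Σ γᵢ = c√t` and `Σ γᵢ² = c²`, which gives the `O(1/√t)` rate.
-/

open MeasureTheory Finset
open scoped InnerProductSpace

section

variable {Ω E : Type*} {mΩ : MeasurableSpace Ω} {μ : Measure Ω}
  [NormedAddCommGroup E] [InnerProductSpace ℝ E]

lemma integrable_inner_of_integrable_norm_sq {X Y : Ω → E}
    (hX : AEStronglyMeasurable X μ) (hY : AEStronglyMeasurable Y μ)
    (hX2 : Integrable (fun ω => ‖X ω‖ ^ 2) μ) (hY2 : Integrable (fun ω => ‖Y ω‖ ^ 2) μ) :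
    Integrable (fun ω => ⟪X ω, Y ω⟫_ℝ) μ := by
  refine ((hX2.add hY2).div_const 2).mono' (hX.inner hY) (ae_of_all _ fun ω => ?_)
  have hCS := abs_real_inner_le_norm (X ω) (Y ω)
  rw [Real.norm_eq_abs, Pi.add_apply]
  nlinarith [sq_nonneg (‖X ω‖ - ‖Y ω‖)]

lemma integral_inner_eq_of_condExp_ae_eq [CompleteSpace E] [IsFiniteMeasure μ]
    {m : MeasurableSpace Ω} (hm : m ≤ mΩ) {X g G : Ω → E} (hX : StronglyMeasurable[m] X)
    (hXg : Integrable (fun ω => ⟪X ω, g ω⟫_ℝ) μ) (hg : Integrable g μ) (hG : μ[g|m] =ᵐ[μ] G) :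
    ∫ ω, ⟪X ω, g ω⟫_ℝ ∂μ = ∫ ω, ⟪X ω, G ω⟫_ℝ ∂μ := calc
  ∫ ω, ⟪X ω, g ω⟫_ℝ ∂μ = ∫ ω, (μ[fun ω => ⟪X ω, g ω⟫_ℝ|m]) ω ∂μ := (integral_condExp hm).symm
  _ = ∫ ω, ⟪X ω, G ω⟫_ℝ ∂μ := by
    refine integral_congr_ae ?_
    filter_upwards [condExp_bilin_of_stronglyMeasurable_left (innerSL ℝ) hX hXg hg, hG]
      with ω hpull hGω
    rw [hGω] at hpull
    exact hpull

lemma integral_norm_sub_smul_sq {X g : Ω → E} (γ : ℝ)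
    (hX : AEStronglyMeasurable X μ) (hg : AEStronglyMeasurable g μ)
    (hX2 : Integrable (fun ω => ‖X ω‖ ^ 2) μ) (hg2 : Integrable (fun ω => ‖g ω‖ ^ 2) μ) :
    ∫ ω, ‖X ω - γ • g ω‖ ^ 2 ∂μ
      = ∫ ω, ‖X ω‖ ^ 2 ∂μ - 2 * γ * ∫ ω, ⟪X ω, g ω⟫_ℝ ∂μ + γ ^ 2 * ∫ ω, ‖g ω‖ ^ 2 ∂μ := by
  have hXg := integrable_inner_of_integrable_norm_sq hX hg hX2 hg2
  have hexpand : ∀ ω, ‖X ω - γ • g ω‖ ^ 2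
      = ‖X ω‖ ^ 2 - 2 * γ * ⟪X ω, g ω⟫_ℝ + γ ^ 2 * ‖g ω‖ ^ 2 := fun ω => by
    rw [norm_sub_sq_real, real_inner_smul_right, norm_smul, mul_pow, Real.norm_eq_abs, sq_abs]
    ring
  have hlin : Integrable (fun ω => 2 * γ * ⟪X ω, g ω⟫_ℝ) μ := hXg.const_mul _
  have hquad : Integrable (fun ω => γ ^ 2 * ‖g ω‖ ^ 2) μ := hg2.const_mul _
  simp_rw [hexpand]
  rw [integral_add (f := fun ω => ‖X ω‖ ^ 2 - 2 * γ * ⟪X ω, g ω⟫_ℝ) (hX2.sub hlin) hquad,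
    integral_sub hX2 hlin, integral_const_mul, integral_const_mul]

end

lemma sum_le_of_le_sub_succ {a b A : ℕ → ℝ} (h : ∀ i, a i ≤ A i - A (i + 1) + b i) (t : ℕ)
    (hA : 0 ≤ A t) : ∑ i ∈ range t, a i ≤ A 0 + ∑ i ∈ range t, b i := calc
  ∑ i ∈ range t, a i ≤ ∑ i ∈ range t, (A i - A (i + 1) + b i) := sum_le_sum fun i _ => h i
  _ = A 0 - A t + ∑ i ∈ range t, b i := by rw [sum_add_distrib, sum_range_sub']
  _ ≤ A 0 + ∑ i ∈ range t, b i := by linarith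

section SGD

variable {Ω E : Type*} {mΩ : MeasurableSpace Ω} {μ : Measure Ω} [IsFiniteMeasure μ]
  [NormedAddCommGroup E] [InnerProductSpace ℝ E] [CompleteSpace E] {θstar : E} {σ : ℝ}

lemma sgd_step_inner_le {m : MeasurableSpace Ω} (hm : m ≤ mΩ) {θ θ' g G : Ω → E} {η : ℝ}
    (hstep : ∀ ω, θ' ω = θ ω - η • g ω) (hθ : StronglyMeasurable[m] θ) (hg : Integrable g μ)
    (hg2 : Integrable (fun ω => ‖g ω‖ ^ 2) μ) (hθ2 : Integrable (fun ω => ‖θ ω - θstar‖ ^ 2) μ)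
    (hmean : μ[g|m] =ᵐ[μ] G) (hvar : ∫ ω, ‖g ω‖ ^ 2 ∂μ ≤ σ ^ 2) :
    2 * η * ∫ ω, ⟪θ ω - θstar, G ω⟫_ℝ ∂μ
      ≤ ∫ ω, ‖θ ω - θstar‖ ^ 2 ∂μ - ∫ ω, ‖θ' ω - θstar‖ ^ 2 ∂μ + η ^ 2 * σ ^ 2 := by
  have hX : StronglyMeasurable[m] fun ω => θ ω - θstar := hθ.sub stronglyMeasurable_const
  have hXg := integrable_inner_of_integrable_norm_sq (hX.mono hm).aestronglyMeasurable
    hg.aestronglyMeasurable hθ2 hg2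
  have hexpand := integral_norm_sub_smul_sq η (hX.mono hm).aestronglyMeasurable
    hg.aestronglyMeasurable hθ2 hg2
  have hshift : ∀ ω, θ' ω - θstar = (θ ω - θstar) - η • g ω := fun ω => by
    rw [hstep]; abel
  simp_rw [hshift, hexpand, ← integral_inner_eq_of_condExp_ae_eq hm hX hXg hg hmean]
  nlinarith [sq_nonneg η]

theorem sgd_weighted_inner_le {ℱ : Filtration ℕ mΩ} {Θ g G : ℕ → Ω → E} {η : ℕ → ℝ}
    (hiter : ∀ i ω, Θ (i + 1) ω = Θ i ω - η i • g i ω)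
    (hadapted : ∀ i, StronglyMeasurable[ℱ i] (Θ i)) (hg : ∀ i, Integrable (g i) μ)
    (hg2 : ∀ i, Integrable (fun ω => ‖g i ω‖ ^ 2) μ)
    (hΘ2 : ∀ i, Integrable (fun ω => ‖Θ i ω - θstar‖ ^ 2) μ)
    (hmean : ∀ i, μ[g i|ℱ i] =ᵐ[μ] G i) (hvar : ∀ i, ∫ ω, ‖g i ω‖ ^ 2 ∂μ ≤ σ ^ 2)
    (t : ℕ) (hη : 0 < ∑ i ∈ range t, η i) :
    ∑ i ∈ range t, (η i / ∑ j ∈ range t, η j) * ∫ ω, ⟪Θ i ω - θstar, G i ω⟫_ℝ ∂μ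
      ≤ (∫ ω, ‖Θ 0 ω - θstar‖ ^ 2 ∂μ + σ ^ 2 * ∑ i ∈ range t, η i ^ 2)
          / (2 * ∑ i ∈ range t, η i) := by
  set B := fun i => ∫ ω, ⟪Θ i ω - θstar, G i ω⟫_ℝ ∂μ
  have htelescope : ∑ i ∈ range t, 2 * η i * B i
      ≤ ∫ ω, ‖Θ 0 ω - θstar‖ ^ 2 ∂μ + σ ^ 2 * ∑ i ∈ range t, η i ^ 2 := by
    rw [mul_sum]
    simp_rw [mul_comm (σ ^ 2)]
    exact sum_le_of_le_sub_succ (fun i => sgd_step_inner_le (ℱ.le i) (hiter i) (hadapted i)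
      (hg i) (hg2 i) (hΘ2 i) (hmean i) (hvar i)) t (integral_nonneg fun _ => sq_nonneg _)
  have hweights : ∑ i ∈ range t, (η i / ∑ j ∈ range t, η j) * B i
      = (∑ i ∈ range t, 2 * η i * B i) / (2 * ∑ i ∈ range t, η i) := by
    rw [sum_div]
    refine sum_congr rfl fun i _ => ?_
    field_simp
  rw [hweights]
  exact div_le_div_of_nonneg_right htelescope (by positivity)

end SGD

lemma sum_range_div_sqrt (c : ℝ) (t : ℕ) :
    ∑ _i ∈ range t, c / Real.sqrt t = c * Real.sqrt t := by
  rw [sum_const, card_range, nsmul_eq_mul, mul_div_left_comm, Real.div_sqrt, mul_comm]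

lemma sum_range_div_sqrt_sq (c : ℝ) {t : ℕ} (ht : t ≠ 0) :
    ∑ _i ∈ range t, (c / Real.sqrt t) ^ 2 = c ^ 2 := by
  rw [sum_const, card_range, nsmul_eq_mul, div_pow, Real.sq_sqrt t.cast_nonneg]
  field_simp

theorem stmt_9_general {p : ℕ}
    (Ω : Type*) [MeasurableSpace Ω] (μ : Measure Ω) [IsProbabilityMeasure μ]
    (ℱ : ℕ → Filtration ℕ (inferInstance : MeasurableSpace Ω))
    (Θstar : EuclideanSpace ℝ (Fin p)) (σ c : ℝ) (hc : 0 < c)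
    -- for each horizon `t`, a run with constant stepsize `γ t = c / √t`:
    (γ : ℕ → ℝ) (hγ : ∀ t, γ t = c / Real.sqrt t)
    (Θ ghat : ℕ → ℕ → Ω → EuclideanSpace ℝ (Fin p))
    (gtil : EuclideanSpace ℝ (Fin p) → EuclideanSpace ℝ (Fin p))
    (hiter : ∀ t i, ∀ ω, Θ t (i + 1) ω = Θ t i ω - γ t • ghat t i ω)
    (hadapted : ∀ t i, StronglyMeasurable[(ℱ t) i] (Θ t i))
    (hgint : ∀ t i, Integrable (ghat t i) μ)
    (hsqint : ∀ t i, Integrable (fun ω => ‖ghat t i ω‖ ^ 2) μ)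
    (hdistint : ∀ t i, Integrable (fun ω => ‖Θ t i ω - Θstar‖ ^ 2) μ)
    (hmean : ∀ t i, μ[ghat t i | (ℱ t) i] =ᵐ[μ] fun ω => gtil (Θ t i ω))
    (hvar : ∀ t i, ∫ ω, ‖ghat t i ω‖ ^ 2 ∂μ ≤ σ ^ 2)
    -- identical deterministic initialization for every horizon:
    (Θ₀ : EuclideanSpace ℝ (Fin p)) (hinit : ∀ t, ∀ ω, Θ t 0 ω = Θ₀) :
    -- `E[(Θ_R − Θ*)ᵀ g̃(Θ_R)]` with `P(R = i) = γᵢ / Σⱼ γⱼ` obeys the stated bound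
    -- and is `O(1/√t)`:
    (∀ t : ℕ, 1 ≤ t →
      ∑ i ∈ range t, (γ t / ∑ j ∈ range t, γ t) *
          ∫ ω, (inner ℝ (Θ t i ω - Θstar) (gtil (Θ t i ω)) : ℝ) ∂μ
        ≤ ((∫ ω, ‖Θ t 0 ω - Θstar‖ ^ 2 ∂μ) + σ ^ 2 * ∑ i ∈ range t, (γ t) ^ 2) /
            (2 * ∑ i ∈ range t, γ t)) ∧
    ∃ C : ℝ, ∀ t : ℕ, 1 ≤ t →
      ∑ i ∈ range t, (γ t / ∑ j ∈ range t, γ t) *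
          ∫ ω, (inner ℝ (Θ t i ω - Θstar) (gtil (Θ t i ω)) : ℝ) ∂μ
        ≤ C / Real.sqrt t := by
  have hsum_γ : ∀ t, ∑ _i ∈ range t, γ t = c * Real.sqrt t := fun t => by
    simp_rw [hγ, sum_range_div_sqrt]
  have hpos : ∀ t : ℕ, 1 ≤ t → 0 < ∑ _i ∈ range t, γ t := fun t ht => by
    rw [hsum_γ]
    exact mul_pos hc (Real.sqrt_pos.2 (by exact_mod_cast ht))
  have hbound := fun t (ht : 1 ≤ t) => sgd_weighted_inner_le (η := fun _ => γ t) (hiter t)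
    (hadapted t) (hgint t) (hsqint t) (hdistint t) (hmean t) (hvar t) t (hpos t ht)
  refine ⟨hbound, (‖Θ₀ - Θstar‖ ^ 2 + σ ^ 2 * c ^ 2) / (2 * c), fun t ht => ?_⟩
  have hsum_γsq : ∑ _i ∈ range t, γ t ^ 2 = c ^ 2 := by
    simp_rw [hγ, sum_range_div_sqrt_sq c (Nat.one_le_iff_ne_zero.1 ht)]
  have hinit_dist : ∫ ω, ‖Θ t 0 ω - Θstar‖ ^ 2 ∂μ = ‖Θ₀ - Θstar‖ ^ 2 := by
    simp [hinit t]
  refine (hbound t ht).trans_eq ?_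
  rw [hinit_dist, hsum_γsq, hsum_γ, div_div, mul_assoc]

theorem stmt_9 {p : ℕ}
    (Ω : Type*) [MeasurableSpace Ω] (μ : Measure Ω) [IsProbabilityMeasure μ]
    (ℱ : ℕ → Filtration ℕ (inferInstance : MeasurableSpace Ω))
    (Θstar : EuclideanSpace ℝ (Fin p)) (σ c : ℝ) (hc : 0 < c)
    -- for each horizon `t`, a run with constant stepsize `γ t = c / √t`:
    (γ : ℕ → ℝ) (hγ : ∀ t, γ t = c / Real.sqrt t)
    (Θ ghat : ℕ → ℕ → Ω → EuclideanSpace ℝ (Fin p))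
    (gtil : EuclideanSpace ℝ (Fin p) → EuclideanSpace ℝ (Fin p))
    (hiter : ∀ t i, ∀ ω, Θ t (i + 1) ω = Θ t i ω - γ t • ghat t i ω)
    (hadapted : ∀ t i, StronglyMeasurable[(ℱ t) i] (Θ t i))
    (hgmeas : ∀ t i, StronglyMeasurable[(ℱ t) (i + 1)] (ghat t i))
    (hgint : ∀ t i, Integrable (ghat t i) μ)
    (hsqint : ∀ t i, Integrable (fun ω => ‖ghat t i ω‖ ^ 2) μ)
    (hdistint : ∀ t i, Integrable (fun ω => ‖Θ t i ω - Θstar‖ ^ 2) μ)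
    (hipint : ∀ t i,
      Integrable (fun ω => (inner ℝ (Θ t i ω - Θstar) (gtil (Θ t i ω)) : ℝ)) μ)
    (hmean : ∀ t i, μ[ghat t i | (ℱ t) i] =ᵐ[μ] fun ω => gtil (Θ t i ω))
    (hvar : ∀ t i, ∫ ω, ‖ghat t i ω‖ ^ 2 ∂μ ≤ σ ^ 2)
    -- identical deterministic initialization for every horizon:
    (Θ₀ : EuclideanSpace ℝ (Fin p)) (hinit : ∀ t, ∀ ω, Θ t 0 ω = Θ₀) :
    -- `E[(Θ_R − Θ*)ᵀ g̃(Θ_R)]` with `P(R = i) = γᵢ / Σⱼ γⱼ` obeys the stated bound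
    -- and is `O(1/√t)`:
    (∀ t : ℕ, 1 ≤ t →
      ∑ i ∈ range t, (γ t / ∑ j ∈ range t, γ t) *
          ∫ ω, (inner ℝ (Θ t i ω - Θstar) (gtil (Θ t i ω)) : ℝ) ∂μ
        ≤ ((∫ ω, ‖Θ t 0 ω - Θstar‖ ^ 2 ∂μ) + σ ^ 2 * ∑ i ∈ range t, (γ t) ^ 2) /
            (2 * ∑ i ∈ range t, γ t)) ∧
    ∃ C : ℝ, ∀ t : ℕ, 1 ≤ t →
      ∑ i ∈ range t, (γ t / ∑ j ∈ range t, γ t) *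
          ∫ ω, (inner ℝ (Θ t i ω - Θstar) (gtil (Θ t i ω)) : ℝ) ∂μ
        ≤ C / Real.sqrt t :=
  stmt_9_general Ω μ ℱ Θstar σ c hc γ hγ Θ ghat gtil hiter hadapted hgint hsqint hdistint hmean hvar
    Θ₀ hinit
end
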